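/- Let n : ℕ and y, θ : Fin n → Bool. For z : Fin n → Bool define the Hadamard-basis measurement amplitude α(z) := ∑_{w : Fin n → Bool} (∏_{j : Fin n} H (z j) (w j)) · ψ(y,θ)(w). Then ‖α(z)‖² = (1/2)^{m₀} if z j = y j for every index j with θ j = true, and ‖α(z)‖² = 0 otherwise, where m₀ is the cardinality of {j | θ j = false}. In particular, measuring all n qubits of a BB84 state in the Hadamard basis yields, with probability 1, an outcome that agrees with y at every index j with θ j = true. -/
import Mathlib


open scoped Matrix

/-- Index `Fin 2` by a bit. -/
def bitIdx (b : Bool) : Fin 2 := if b then 1 else 0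

/-- The Hadamard matrix `(1/√2) · !![1, 1; 1, -1]`. -/
noncomputable def Hmat : Matrix (Fin 2) (Fin 2) ℂ :=
  ((1 : ℂ) / Real.sqrt 2) • !![1, 1; 1, -1]

/-- `M false = 1`, `M true = H`. -/
noncomputable def Mmat (b : Bool) : Matrix (Fin 2) (Fin 2) ℂ :=
  if b then Hmat else 1

/-- Computational-basis representation of the BB84 state `⊗_j H^{θ_j}|y_j⟩`. -/
noncomputable def bb84 {n : ℕ} (y θ : Fin n → Bool) : (Fin n → Bool) → ℂ :=
  fun z => ∏ j : Fin n, Mmat (θ j) (bitIdx (z j)) (bitIdx (y j))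

/-- Amplitude for outcome `z` when measuring all qubits of the BB84 state in the
Hadamard basis: the `z`-component of `H^{⊗n}` applied to `ψ(y,θ)`. -/
noncomputable def hadamardMeasAmp {n : ℕ} (y θ : Fin n → Bool) (z : Fin n → Bool) : ℂ :=
  ∑ w : Fin n → Bool, (∏ j : Fin n, Hmat (bitIdx (z j)) (bitIdx (w j))) * bb84 y θ w

lemma factor_norm_sq (tb zb yb : Bool) :
    ‖∑ b : Bool, Hmat (bitIdx zb) (bitIdx b) * Mmat tb (bitIdx b) (bitIdx yb)‖ ^ 2
      = if tb then (if zb = yb then 1 else 0) else (1/2 : ℝ) := by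
  have hs : (Real.sqrt 2 : ℂ) * (Real.sqrt 2 : ℂ) = 2 := by
    norm_cast
    exact Real.mul_self_sqrt (by norm_num)
  have hn : ‖((1:ℂ) / (Real.sqrt 2 : ℂ))‖ = 1 / Real.sqrt 2 := by
    rw [norm_div, norm_one, Complex.norm_real]
    simp [Real.sqrt_nonneg]
  have hsq : (1 / Real.sqrt 2 : ℝ) ^ 2 = 1/2 := by
    rw [div_pow, one_pow, Real.sq_sqrt (by norm_num : (2:ℝ) ≥ 0)]
  cases tb <;> cases zb <;> cases yb <;>
    simp [Hmat, Mmat, bitIdx, Fintype.sum_bool, Matrix.one_apply]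
  all_goals (
    have h1 : ((Real.sqrt 2 : ℂ))⁻¹ * (Real.sqrt 2 : ℂ)⁻¹ + (Real.sqrt 2 : ℂ)⁻¹ * (Real.sqrt 2 : ℂ)⁻¹ = 1 := by
      rw [← mul_inv, hs]; norm_num
    rw [h1]; left; simp)

theorem bb84_hadamard_measurement {n : ℕ} (y θ : Fin n → Bool) (z : Fin n → Bool) :
    ‖hadamardMeasAmp y θ z‖ ^ 2 =
      if ∀ j : Fin n, θ j = true → z j = y j then
        ((1 : ℝ) / 2) ^ (Finset.univ.filter fun j : Fin n => θ j = false).card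
      else 0 := by
  classical
  have hfact : hadamardMeasAmp y θ z
      = ∏ j : Fin n, ∑ b : Bool,
          Hmat (bitIdx (z j)) (bitIdx b) * Mmat (θ j) (bitIdx b) (bitIdx (y j)) := by
    rw [Finset.prod_univ_sum, Fintype.piFinset_univ]
    unfold hadamardMeasAmp bb84
    exact Finset.sum_congr rfl fun w _ => (Finset.prod_mul_distrib).symm
  rw [hfact, norm_prod, ← Finset.prod_pow]
  by_cases hc : ∀ j : Fin n, θ j = true → z j = y j
  · rw [if_pos hc]
    have hfe : ∀ j ∈ (Finset.univ : Finset (Fin n)),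
        ‖∑ b : Bool, Hmat (bitIdx (z j)) (bitIdx b) * Mmat (θ j) (bitIdx b) (bitIdx (y j))‖ ^ 2
          = if θ j = false then (1/2 : ℝ) else 1 := by
      intro j _
      rw [factor_norm_sq]
      cases hj : θ j
      · simp
      · simp [hc j hj]
    rw [Finset.prod_congr rfl hfe]
    rw [← Finset.prod_filter_mul_prod_filter_not Finset.univ (fun j => θ j = false)]
    rw [Finset.prod_congr rfl (fun j hj => if_pos (Finset.mem_filter.mp hj).2),
        Finset.prod_congr rfl (fun j hj => if_neg (Finset.mem_filter.mp hj).2),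
        Finset.prod_const, Finset.prod_const, one_pow, mul_one]
  · rw [if_neg hc]
    push_neg at hc
    obtain ⟨j0, hj0, hne⟩ := hc
    refine Finset.prod_eq_zero (Finset.mem_univ j0) ?_
    rw [factor_norm_sq, if_pos hj0, if_neg hne]
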